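/- arXiv:1904.12371 — 2 statements merged into one kernel-verified Lean document; each statement's English description precedes it below -/
import Mathlib

section
/- Naive sub-MC reasoning is unsound for liveness properties: there exist a finite nonempty state type S, transition functions P, P' : S → S → ℝ of finite MCs, an initial state s0 : S, a set C ⊆ S with s0 ∈ C, a set G ⊆ S, and λ ∈ [0,1], such that P s t = P' s t for all s ∈ C and all t (so the sub-MCs with critical states C coincide), Prob_P(s0,G) ≤ λ (P violates the liveness property P_{>λ}(◇G)), yet Prob_{P'}(s0,G) > λ (P' satisfies it). -/
open scoped Classical BigOperators

/-- `n`-step reachability probability `Pr_P^n(s, G)`. -/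
noncomputable def Pr {S : Type*} [Fintype S] (P : S → S → ℝ) : ℕ → S → Set S → ℝ
  | 0, s, G => if s ∈ G then 1 else 0
  | n + 1, s, G => if s ∈ G then 1 else ∑ t, P s t * Pr P n t G

/-- Reachability probability `Prob_P(s, G) = ⨆ n, Pr_P^n(s, G)`. -/
noncomputable def Prob {S : Type*} [Fintype S] (P : S → S → ℝ) (s : S) (G : Set S) : ℝ :=
  ⨆ n : ℕ, Pr P n s G

/-- `C`-restriction of `P`: states outside `C` are made absorbing. -/
noncomputable def restrictMC {S : Type*} (C : Set S) (P : S → S → ℝ) (s t : S) : ℝ :=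
  if s ∈ C then P s t else (if t = s then 1 else 0)

/-- `n`-step probability of reaching `B` while avoiding `G`. -/
noncomputable def APr {S : Type*} [Fintype S] (P : S → S → ℝ) : ℕ → S → Set S → Set S → ℝ
  | 0, s, B, _ => if s ∈ B then 1 else 0
  | n + 1, s, B, G => if s ∈ B then 1 else if s ∈ G then 0 else ∑ t, P s t * APr P n t B G

/-- `AProb_P(s, B, G) = ⨆ n, APr_P^n(s, B, G)`. -/
noncomputable def AProb {S : Type*} [Fintype S] (P : S → S → ℝ) (s : S) (B G : Set S) : ℝ :=
  ⨆ n : ℕ, APr P n s B G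

/-- `s` has a path to `G` under `P`. -/
def HasPathTo {S : Type*} (P : S → S → ℝ) (s : S) (G : Set S) : Prop :=
  ∃ (m : ℕ) (u : ℕ → S), u 0 = s ∧ (∀ i < m, 0 < P (u i) (u (i + 1))) ∧ u m ∈ G

/-- `B_P(G)`: the set of states with no path to `G` under `P`. -/
def BSet {S : Type*} (P : S → S → ℝ) (G : Set S) : Set S :=
  {s | ¬ HasPathTo P s G}

/-- Transition function `P_r` of the instantiated MC `D_r` of a family `𝔓`. -/
noncomputable def Pinst {S K : Type*} [Fintype K] (𝔓 : S → K → ℝ) (r : K → S) (s t : S) : ℝ :=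
  ∑ k, if r k = t then 𝔓 s k else 0

/-- Parameter `k` occurs at some state of `C`. -/
def OccursIn {S K : Type*} (𝔓 : S → K → ℝ) (C : Set S) (k : K) : Prop :=
  ∃ s ∈ C, 0 < 𝔓 s k

/-- `u` is reachable from `s0` under `P`. -/
def ReachableFrom {S : Type*} (P : S → S → ℝ) (s0 u : S) : Prop :=
  ∃ (m : ℕ) (v : ℕ → S), v 0 = s0 ∧ (∀ i < m, 0 < P (v i) (v (i + 1))) ∧ v m = u

/-!
Both chains send the critical state `0` to `1` and differ only at `1`. Under `P` the state `1`
is absorbing, so the closed set `{0, 1}` traps the chain away from `G = {2}` and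
`Prob_P(0, G) = 0`; under `P'` the state `1` moves to `2`, which is then reached within two
steps. A check confined to the critical states `C = {0}` cannot tell the two chains apart.
-/

noncomputable def detMC {S : Type*} [DecidableEq S] (f : S → S) (s t : S) : ℝ :=
  if t = f s then 1 else 0

lemma detMC_nonneg {S : Type*} [DecidableEq S] (f : S → S) (s t : S) : 0 ≤ detMC f s t := by
  unfold detMC
  split <;> norm_num

lemma detMC_sum {S : Type*} [Fintype S] [DecidableEq S] (f : S → S) (s : S) :
    ∑ t, detMC f s t = 1 := by
  simp [detMC]

section Reachability

variable {S : Type*} [Fintype S]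

lemma Pr_detMC_succ [DecidableEq S] (f : S → S) (n : ℕ) (s : S) (G : Set S) :
    Pr (detMC f) (n + 1) s G = if s ∈ G then 1 else Pr (detMC f) n (f s) G := by
  simp [Pr, detMC]

lemma Pr_le_one {P : S → S → ℝ} (h0 : ∀ s t, 0 ≤ P s t) (h1 : ∀ s, ∑ t, P s t = 1)
    (n : ℕ) (s : S) (G : Set S) : Pr P n s G ≤ 1 := by
  induction n generalizing s with
  | zero =>
    simp only [Pr]
    split <;> norm_num
  | succ n ih =>
    simp only [Pr]
    split
    · exact le_rfl
    · calc ∑ t, P s t * Pr P n t G ≤ ∑ t, P s t := by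
            gcongr with t
            exact mul_le_of_le_one_right (h0 s t) (ih t)
        _ = 1 := h1 s

lemma Pr_le_Prob {P : S → S → ℝ} (h0 : ∀ s t, 0 ≤ P s t) (h1 : ∀ s, ∑ t, P s t = 1)
    (n : ℕ) (s : S) (G : Set S) : Pr P n s G ≤ Prob P s G :=
  le_ciSup ⟨1, Set.forall_mem_range.2 fun m => Pr_le_one h0 h1 m s G⟩ n

lemma Pr_eq_zero_of_closed (P : S → S → ℝ) {A G : Set S} (hAG : Disjoint A G)
    (hA : ∀ s ∈ A, ∀ t ∉ A, P s t = 0) (n : ℕ) {s : S} (hs : s ∈ A) : Pr P n s G = 0 := by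
  have hsG : s ∉ G := hAG.notMem_of_mem_left hs
  induction n generalizing s with
  | zero => simp [Pr, hsG]
  | succ n ih =>
    simp only [Pr, hsG, if_false]
    refine Finset.sum_eq_zero fun t _ => ?_
    by_cases ht : t ∈ A
    · rw [ih ht (hAG.notMem_of_mem_left ht), mul_zero]
    · rw [hA s hs t ht, zero_mul]

lemma Prob_eq_zero_of_closed (P : S → S → ℝ) {A G : Set S} (hAG : Disjoint A G)
    (hA : ∀ s ∈ A, ∀ t ∉ A, P s t = 0) {s : S} (hs : s ∈ A) : Prob P s G = 0 := by
  simp [Prob, Pr_eq_zero_of_closed P hAG hA _ hs]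

end Reachability

/-- naive sub-MC reasoning is unsound for liveness properties. -/
theorem stmt_5 :
    ∃ (S : Type) (_ : Fintype S) (_ : Nonempty S) (P P' : S → S → ℝ)
      (s0 : S) (C : Set S) (G : Set S) (lam : ℝ),
      (∀ s t, 0 ≤ P s t) ∧ (∀ s, ∑ t, P s t = 1) ∧
      (∀ s t, 0 ≤ P' s t) ∧ (∀ s, ∑ t, P' s t = 1) ∧
      s0 ∈ C ∧ 0 ≤ lam ∧ lam ≤ 1 ∧
      (∀ s ∈ C, ∀ t, P s t = P' s t) ∧
      Prob P s0 G ≤ lam ∧ Prob P' s0 G > lam := by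
  refine ⟨Fin 3, inferInstance, inferInstance, detMC ![1, 1, 2], detMC ![1, 2, 2],
    0, {0}, {2}, 0, detMC_nonneg _, detMC_sum _, detMC_nonneg _, detMC_sum _, rfl, le_rfl,
    zero_le_one, ?_, ?_, ?_⟩
  · rintro s rfl t
    rfl
  · refine (Prob_eq_zero_of_closed _ (A := {0, 1}) ?_ ?_ (by simp)).le
    · simp [Set.disjoint_singleton_right]
    · intro s hs t ht
      fin_cases s <;> simp_all [detMC]
  · calc (0 : ℝ) < Pr (detMC ![1, 2, 2]) 2 0 {2} := by
          rw [Pr_detMC_succ, Pr_detMC_succ]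
          simp [Pr]
      _ ≤ Prob (detMC ![1, 2, 2]) 0 {2} := Pr_le_Prob (detMC_nonneg _) (detMC_sum _) 2 0 {2}
end

section
/- Partition theorem for reachability: let P be the transition function of a finite MC over finite nonempty state type S, let G ⊆ S, and let B = B_P(G) be the set of states with no path to G under P. Then for every state s, Prob_P(s, G) + AProb_P(s, B, G) = 1, i.e., the probability of reaching G and the probability of reaching B while avoiding G sum to one. -/
open scoped Classical BigOperators

/-!
Let `B = B_P(G)`. Then `B` is absorbing and disjoint from `G`, so `Pr_P^n(·, G)` vanishes on
`B`, and the three quantities "reached `G`", "reached `B` avoiding `G`" and "not yet reached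
`G ∪ B`" within `n` steps add up to `1` at every `n`, since their sum obeys the recursion of the
constant `1`. Every state has a path into `G ∪ B`, so by finiteness there are `M` and `c < 1`
with the third quantity at most `c` after `M` steps from any state; it is submultiplicative in the
number of steps, hence at most `c ^ k` after `M k` steps, and tends to `0`. The first two are
monotone in `n`, so their limits are `Prob` and `AProb`.
-/

open Filter Topology

noncomputable def AvoidPr {S : Type*} [Fintype S] (P : S → S → ℝ) (A : Set S) : ℕ → S → ℝ
  | 0, s => if s ∈ A then 0 else 1
  | n + 1, s => if s ∈ A then 0 else ∑ t, P s t * AvoidPr P A n t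

def IsAbsorbing {S : Type*} (P : S → S → ℝ) (B : Set S) : Prop :=
  ∀ s ∈ B, ∀ t, 0 < P s t → t ∈ B

section

variable {S : Type*} [Fintype S] {P : S → S → ℝ} {A B G : Set S} {s : S} {n : ℕ}

lemma Pr_succ_of_notMem (hs : s ∉ G) : Pr P (n + 1) s G = ∑ t, P s t * Pr P n t G := by
  simp [Pr, hs]

lemma APr_succ_of_notMem (hsB : s ∉ B) (hsG : s ∉ G) :
    APr P (n + 1) s B G = ∑ t, P s t * APr P n t B G := by
  simp [APr, hsB, hsG]

lemma AvoidPr_succ_of_notMem (hs : s ∉ A) :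
    AvoidPr P A (n + 1) s = ∑ t, P s t * AvoidPr P A n t := by
  simp [AvoidPr, hs]

lemma AvoidPr_of_mem (hs : s ∈ A) : ∀ n, AvoidPr P A n s = 0
  | 0 | _ + 1 => by simp [AvoidPr, hs]

lemma Pr_nonneg (hP0 : ∀ s t, 0 ≤ P s t) : ∀ n s, 0 ≤ Pr P n s G
  | 0, s => by unfold Pr; split <;> norm_num
  | n + 1, s => by
    unfold Pr; split
    · exact zero_le_one
    · exact Finset.sum_nonneg fun t _ => mul_nonneg (hP0 s t) (Pr_nonneg hP0 n t)

lemma APr_nonneg (hP0 : ∀ s t, 0 ≤ P s t) : ∀ n s, 0 ≤ APr P n s B G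
  | 0, s => by unfold APr; split <;> norm_num
  | n + 1, s => by
    unfold APr; split
    · exact zero_le_one
    · split
      · exact le_rfl
      · exact Finset.sum_nonneg fun t _ => mul_nonneg (hP0 s t) (APr_nonneg hP0 n t)

lemma AvoidPr_nonneg (hP0 : ∀ s t, 0 ≤ P s t) : ∀ n s, 0 ≤ AvoidPr P A n s
  | 0, s => by unfold AvoidPr; split <;> norm_num
  | n + 1, s => by
    unfold AvoidPr; split
    · exact le_rfl
    · exact Finset.sum_nonneg fun t _ => mul_nonneg (hP0 s t) (AvoidPr_nonneg hP0 n t)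

lemma AvoidPr_le_one (hP0 : ∀ s t, 0 ≤ P s t) (hP1 : ∀ s, ∑ t, P s t = 1) :
    ∀ n s, AvoidPr P A n s ≤ 1
  | 0, s => by unfold AvoidPr; split <;> norm_num
  | n + 1, s => by
    unfold AvoidPr; split
    · exact zero_le_one
    · calc ∑ t, P s t * AvoidPr P A n t ≤ ∑ t, P s t :=
            Finset.sum_le_sum fun t _ =>
              mul_le_of_le_one_right (hP0 s t) (AvoidPr_le_one hP0 hP1 n t)
        _ = 1 := hP1 s

lemma Pr_le_Pr_succ (hP0 : ∀ s t, 0 ≤ P s t) : ∀ n s, Pr P n s G ≤ Pr P (n + 1) s G := by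
  intro n
  induction n with
  | zero =>
    intro s
    by_cases hs : s ∈ G
    · simp [Pr, hs]
    · rw [Pr_succ_of_notMem hs, show Pr P 0 s G = 0 by simp [Pr, hs]]
      exact Finset.sum_nonneg fun t _ => mul_nonneg (hP0 s t) (Pr_nonneg hP0 0 t)
  | succ n ih =>
    intro s
    by_cases hs : s ∈ G
    · simp [Pr, hs]
    · rw [Pr_succ_of_notMem hs, Pr_succ_of_notMem hs]
      exact Finset.sum_le_sum fun t _ => mul_le_mul_of_nonneg_left (ih t) (hP0 s t)

lemma APr_le_APr_succ (hP0 : ∀ s t, 0 ≤ P s t) :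
    ∀ n s, APr P n s B G ≤ APr P (n + 1) s B G := by
  intro n
  induction n with
  | zero =>
    intro s
    by_cases hsB : s ∈ B
    · simp [APr, hsB]
    by_cases hsG : s ∈ G
    · simp [APr, hsB, hsG]
    rw [APr_succ_of_notMem hsB hsG, show APr P 0 s B G = 0 by simp [APr, hsB]]
    exact Finset.sum_nonneg fun t _ => mul_nonneg (hP0 s t) (APr_nonneg hP0 0 t)
  | succ n ih =>
    intro s
    by_cases hsB : s ∈ B
    · simp [APr, hsB]
    by_cases hsG : s ∈ G
    · simp [APr, hsB, hsG]
    rw [APr_succ_of_notMem hsB hsG, APr_succ_of_notMem hsB hsG]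
    exact Finset.sum_le_sum fun t _ => mul_le_mul_of_nonneg_left (ih t) (hP0 s t)

lemma AvoidPr_succ_le (hP0 : ∀ s t, 0 ≤ P s t) (hP1 : ∀ s, ∑ t, P s t = 1) :
    ∀ n s, AvoidPr P A (n + 1) s ≤ AvoidPr P A n s := by
  intro n
  induction n with
  | zero =>
    intro s
    by_cases hs : s ∈ A
    · simp [AvoidPr, hs]
    · rw [show AvoidPr P A 0 s = 1 by simp [AvoidPr, hs]]
      exact AvoidPr_le_one hP0 hP1 1 s
  | succ n ih =>
    intro s
    by_cases hs : s ∈ A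
    · simp [AvoidPr, hs]
    · rw [AvoidPr_succ_of_notMem hs, AvoidPr_succ_of_notMem hs]
      exact Finset.sum_le_sum fun t _ => mul_le_mul_of_nonneg_left (ih t) (hP0 s t)

lemma antitone_AvoidPr (hP0 : ∀ s t, 0 ≤ P s t) (hP1 : ∀ s, ∑ t, P s t = 1) (s : S) :
    Antitone fun n => AvoidPr P A n s :=
  antitone_nat_of_succ_le fun n => AvoidPr_succ_le hP0 hP1 n s

lemma AvoidPr_lt_one_of_path (hP0 : ∀ s t, 0 ≤ P s t) (hP1 : ∀ s, ∑ t, P s t = 1) :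
    ∀ (m : ℕ) (u : ℕ → S), (∀ i < m, 0 < P (u i) (u (i + 1))) → u m ∈ A →
      AvoidPr P A m (u 0) < 1 := by
  intro m
  induction m with
  | zero => intro u _ hA; simp [AvoidPr, hA]
  | succ m ih =>
    intro u hstep hA
    by_cases hs : u 0 ∈ A
    · simp [AvoidPr, hs]
    have hnext : AvoidPr P A m (u 1) < 1 :=
      ih (fun i => u (i + 1)) (fun i hi => hstep (i + 1) (by omega)) hA
    rw [AvoidPr_succ_of_notMem hs, ← hP1 (u 0)]
    refine Finset.sum_lt_sum (fun t _ => mul_le_of_le_one_right (hP0 _ t)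
      (AvoidPr_le_one hP0 hP1 m t)) ⟨u 1, Finset.mem_univ _, ?_⟩
    exact mul_lt_of_lt_one_right (hstep 0 (by omega)) hnext

lemma AvoidPr_add_le_mul (hP0 : ∀ s t, 0 ≤ P s t) {b : ℝ}
    (hb : ∀ t, AvoidPr P A n t ≤ b) :
    ∀ m s, AvoidPr P A (n + m) s ≤ b * AvoidPr P A m s := by
  intro m
  induction m with
  | zero =>
    intro s
    by_cases hs : s ∈ A
    · simp [AvoidPr_of_mem hs]
    · simpa [AvoidPr, hs] using hb s
  | succ m ih =>
    intro s
    by_cases hs : s ∈ A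
    · simp [AvoidPr_of_mem hs]
    rw [← add_assoc, AvoidPr_succ_of_notMem hs, AvoidPr_succ_of_notMem hs, Finset.mul_sum]
    refine Finset.sum_le_sum fun t _ => ?_
    calc P s t * AvoidPr P A (n + m) t ≤ P s t * (b * AvoidPr P A m t) :=
          mul_le_mul_of_nonneg_left (ih t) (hP0 s t)
      _ = b * (P s t * AvoidPr P A m t) := by ring

lemma exists_AvoidPr_le_lt_one (hP0 : ∀ s t, 0 ≤ P s t) (hP1 : ∀ s, ∑ t, P s t = 1)
    [Nonempty S] (hpath : ∀ s, HasPathTo P s A) :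
    ∃ M : ℕ, ∃ c < 1, ∀ s, AvoidPr P A M s ≤ c := by
  have hlen : ∀ s, ∃ m, AvoidPr P A m s < 1 := fun s => by
    obtain ⟨m, u, rfl, hstep, hA⟩ := hpath s
    exact ⟨m, AvoidPr_lt_one_of_path hP0 hP1 m u hstep hA⟩
  choose len hlen using hlen
  let M := Finset.univ.sup len
  have hM : ∀ s, AvoidPr P A M s < 1 := fun s =>
    (antitone_AvoidPr hP0 hP1 s (Finset.le_sup (Finset.mem_univ s))).trans_lt (hlen s)
  obtain ⟨s₀, -, hs₀⟩ :=
    Finset.univ.exists_max_image (fun s => AvoidPr P A M s) Finset.univ_nonempty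
  exact ⟨M, _, hM s₀, fun s => hs₀ s (Finset.mem_univ s)⟩

lemma tendsto_AvoidPr_zero (hP0 : ∀ s t, 0 ≤ P s t) (hP1 : ∀ s, ∑ t, P s t = 1)
    (hpath : ∀ s, HasPathTo P s A) (s : S) :
    Tendsto (fun n => AvoidPr P A n s) atTop (𝓝 0) := by
  have : Nonempty S := ⟨s⟩
  obtain ⟨M, c, hc1, hc⟩ := exists_AvoidPr_le_lt_one hP0 hP1 hpath
  have hc0 : 0 ≤ c := (AvoidPr_nonneg hP0 M s).trans (hc s)
  have hpow : ∀ k, AvoidPr P A (M * k) s ≤ c ^ k := by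
    intro k
    induction k with
    | zero => simpa using AvoidPr_le_one hP0 hP1 0 s
    | succ k ih =>
      calc AvoidPr P A (M * (k + 1)) s = AvoidPr P A (M + M * k) s := by ring_nf
        _ ≤ c * AvoidPr P A (M * k) s := AvoidPr_add_le_mul hP0 hc (M * k) s
        _ ≤ c * c ^ k := mul_le_mul_of_nonneg_left ih hc0
        _ = c ^ (k + 1) := (pow_succ' c k).symm
  have hbdd : BddBelow (Set.range fun n => AvoidPr P A n s) :=
    ⟨0, by rintro _ ⟨n, rfl⟩; exact AvoidPr_nonneg hP0 n s⟩
  have hinf : ⨅ n, AvoidPr P A n s = 0 := by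
    refine le_antisymm ?_ (le_ciInf fun n => AvoidPr_nonneg hP0 n s)
    exact ge_of_tendsto' (tendsto_pow_atTop_nhds_zero_of_lt_one hc0 hc1)
      fun k => (ciInf_le hbdd (M * k)).trans (hpow k)
  simpa [hinf] using tendsto_atTop_ciInf (antitone_AvoidPr hP0 hP1 s) hbdd

lemma Pr_eq_zero_of_isAbsorbing (hP0 : ∀ s t, 0 ≤ P s t) (hB : IsAbsorbing P B)
    (hBG : Disjoint B G) : ∀ n, ∀ s ∈ B, Pr P n s G = 0 := by
  intro n
  induction n with
  | zero => intro s hs; simp [Pr, hBG.notMem_of_mem_left hs]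
  | succ n ih =>
    intro s hs
    rw [Pr_succ_of_notMem (hBG.notMem_of_mem_left hs)]
    refine Finset.sum_eq_zero fun t _ => ?_
    rcases (hP0 s t).lt_or_eq with hpos | hzero
    · rw [ih t (hB s hs t hpos), mul_zero]
    · rw [← hzero, zero_mul]

lemma Pr_add_APr_add_AvoidPr (hP0 : ∀ s t, 0 ≤ P s t) (hP1 : ∀ s, ∑ t, P s t = 1)
    (hB : IsAbsorbing P B) (hBG : Disjoint B G) :
    ∀ n s, Pr P n s G + APr P n s B G + AvoidPr P (G ∪ B) n s = 1 := by
  intro n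
  induction n with
  | zero =>
    intro s
    by_cases hsG : s ∈ G
    · simp [Pr, APr, AvoidPr, hsG, hBG.notMem_of_mem_right hsG]
    · by_cases hsB : s ∈ B <;> simp [Pr, APr, AvoidPr, hsG, hsB]
  | succ n ih =>
    intro s
    by_cases hsG : s ∈ G
    · simp [Pr, APr, AvoidPr, hsG, hBG.notMem_of_mem_right hsG]
    by_cases hsB : s ∈ B
    · simp [Pr_eq_zero_of_isAbsorbing hP0 hB hBG _ s hsB, APr, AvoidPr, hsB]
    have hsA : s ∉ G ∪ B := by simp [hsG, hsB]
    rw [Pr_succ_of_notMem hsG, APr_succ_of_notMem hsB hsG, AvoidPr_succ_of_notMem hsA,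
      ← Finset.sum_add_distrib, ← Finset.sum_add_distrib, ← hP1 s]
    exact Finset.sum_congr rfl fun t _ => by rw [← mul_add, ← mul_add, ih t, mul_one]

end

section

variable {S : Type*} {P : S → S → ℝ} {G H : Set S} {s : S}

lemma HasPathTo.mono (h : HasPathTo P s G) (hGH : G ⊆ H) : HasPathTo P s H := by
  obtain ⟨m, u, h0, hstep, hG⟩ := h
  exact ⟨m, u, h0, hstep, hGH hG⟩

lemma hasPathTo_of_mem (hs : s ∈ G) : HasPathTo P s G :=
  ⟨0, fun _ => s, rfl, fun _ hi => absurd hi (Nat.not_lt_zero _), hs⟩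

lemma disjoint_BSet : Disjoint (BSet P G) G :=
  Set.disjoint_left.2 fun _ hB hG => hB (hasPathTo_of_mem hG)

lemma isAbsorbing_BSet : IsAbsorbing P (BSet P G) := by
  intro s hs t hpos ht
  obtain ⟨m, u, rfl, hstep, hG⟩ := ht
  refine hs ⟨m + 1, fun i => if i = 0 then s else u (i - 1), rfl, ?_, by simpa using hG⟩
  rintro (_ | i) hi
  · simpa using hpos
  · simpa using hstep i (by omega)

lemma hasPathTo_union_BSet (s : S) : HasPathTo P s (G ∪ BSet P G) := by
  by_cases hs : s ∈ BSet P G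
  · exact hasPathTo_of_mem (Or.inr hs)
  · exact (not_not.1 hs).mono Set.subset_union_left

end

theorem stmt_11_general {S : Type*} [Fintype S] (P : S → S → ℝ)
    (hP0 : ∀ s t, 0 ≤ P s t) (hP1 : ∀ s, ∑ t, P s t = 1)
    (G : Set S) (s : S) :
    Prob P s G + AProb P s (BSet P G) G = 1 := by
  have hsum n : Pr P n s G + APr P n s (BSet P G) G + AvoidPr P (G ∪ BSet P G) n s = 1 :=
    Pr_add_APr_add_AvoidPr hP0 hP1 isAbsorbing_BSet disjoint_BSet n s
  have hPr : Tendsto (fun n => Pr P n s G) atTop (𝓝 (Prob P s G)) :=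
    tendsto_atTop_ciSup (monotone_nat_of_le_succ fun n => Pr_le_Pr_succ hP0 n s)
      ⟨1, by
        rintro _ ⟨n, rfl⟩
        linarith [hsum n, APr_nonneg (B := BSet P G) (G := G) hP0 n s,
          AvoidPr_nonneg (A := G ∪ BSet P G) hP0 n s]⟩
  have hAPr : Tendsto (fun n => APr P n s (BSet P G) G) atTop
      (𝓝 (AProb P s (BSet P G) G)) :=
    tendsto_atTop_ciSup (monotone_nat_of_le_succ fun n => APr_le_APr_succ hP0 n s)
      ⟨1, by
        rintro _ ⟨n, rfl⟩
        linarith [hsum n, Pr_nonneg (G := G) hP0 n s,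
          AvoidPr_nonneg (A := G ∪ BSet P G) hP0 n s]⟩
  have hone : Tendsto (fun n => Pr P n s G + APr P n s (BSet P G) G) atTop (𝓝 1) := by
    have h : Tendsto (fun n => 1 - AvoidPr P (G ∪ BSet P G) n s) atTop (𝓝 (1 - 0)) :=
      tendsto_const_nhds.sub (tendsto_AvoidPr_zero hP0 hP1 hasPathTo_union_BSet s)
    rw [sub_zero] at h
    exact h.congr fun n => by linarith [hsum n]
  exact tendsto_nhds_unique (hPr.add hAPr) hone

/-- partition theorem for reachability. -/
theorem stmt_11 {S : Type*} [Fintype S] [Nonempty S] (P : S → S → ℝ)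
    (hP0 : ∀ s t, 0 ≤ P s t) (hP1 : ∀ s, ∑ t, P s t = 1)
    (G : Set S) (s : S) :
    Prob P s G + AProb P s (BSet P G) G = 1 :=
  stmt_11_general P hP0 hP1 G s
end
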